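/- Let p and l be distinct odd primes and let a, b ∈ Γ = ψ(Γ̃). Then bab⁻¹ commutes with a if and only if b commutes with a. -/

import Mathlib

open Quaternion Matrix
open scoped Classical

noncomputable section

/-- The set `Γ̃` of integer quaternions with norm `p^r l^s` and the appropriate
parity conditions. -/
def GammaTilde (p l : ℕ) : Set ℍ[ℤ] :=
  {x | (∃ r s : ℕ, Quaternion.normSq x = (p : ℤ) ^ r * (l : ℤ) ^ s) ∧
       (Quaternion.normSq x % 4 = 1 →
          Odd x.re ∧ Even x.imI ∧ Even x.imJ ∧ Even x.imK) ∧
       (Quaternion.normSq x % 4 = 3 →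
          Even x.imI ∧ Odd x.re ∧ Odd x.imJ ∧ Odd x.imK)}

/-- The set `Ã ⊆ Γ̃` of elements of positive real part and norm `p`. -/
def Atilde (p l : ℕ) : Set ℍ[ℤ] :=
  {x | x ∈ GammaTilde p l ∧ 0 < x.re ∧ Quaternion.normSq x = (p : ℤ)}

/-- The set `B̃ ⊆ Γ̃` of elements of positive real part and norm `l`. -/
def Btilde (p l : ℕ) : Set ℍ[ℤ] :=
  {y | y ∈ GammaTilde p l ∧ 0 < y.re ∧ Quaternion.normSq y = (l : ℤ)}

/-- The projective general linear group `PGL₂(K)`: `GL₂(K)` modulo its center. -/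
abbrev PGL2 (K : Type*) [Field K] : Type _ :=
  GL (Fin 2) K ⧸ Subgroup.center (GL (Fin 2) K)

/-- The matrix `M_{c,d}(x)` associated to an integer quaternion `x`. -/
def Mcd {K : Type*} [Field K] (c d : K) (x : ℍ[ℤ]) : Matrix (Fin 2) (Fin 2) K :=
  !![(x.re : K) + (x.imI : K) * c + (x.imK : K) * d,
     -(x.imI : K) * d + (x.imJ : K) + (x.imK : K) * c;
     -(x.imI : K) * d - (x.imJ : K) + (x.imK : K) * c,
     (x.re : K) - (x.imI : K) * c - (x.imK : K) * d]

lemma det_Mcd {K : Type*} [Field K] {c d : K} (hcd : c ^ 2 + d ^ 2 + 1 = 0)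
    (x : ℍ[ℤ]) : (Mcd c d x).det = ((Quaternion.normSq x : ℤ) : K) := by
  rw [Quaternion.normSq_def']
  rw [Mcd, Matrix.det_fin_two_of]
  push_cast
  linear_combination (-(x.imI : K) ^ 2 - (x.imK : K) ^ 2) * hcd

lemma det_Mcd_ne_zero {K : Type*} [Field K] [CharZero K] {c d : K}
    (hcd : c ^ 2 + d ^ 2 + 1 = 0) {x : ℍ[ℤ]} (hx : x ≠ 0) :
    (Mcd c d x).det ≠ 0 := by
  rw [det_Mcd hcd]
  exact_mod_cast Quaternion.normSq_ne_zero.mpr hx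

/-- The image of a nonzero integer quaternion in `GL₂(K)` (junk value `1` at `x = 0`). -/
def psiGL {K : Type*} [Field K] [CharZero K] (c d : K) (hcd : c ^ 2 + d ^ 2 + 1 = 0)
    (x : ℍ[ℤ]) : GL (Fin 2) K :=
  if hx : x = 0 then 1
  else Matrix.GeneralLinearGroup.mkOfDetNeZero (Mcd c d x) (det_Mcd_ne_zero hcd hx)

variable (p l : ℕ) [Fact p.Prime] [Fact l.Prime]

/-- The map `ψ : ℍ(ℤ) → PGL₂(ℚ_p) × PGL₂(ℚ_l)` (with junk value at `0`). -/
def psi (cp dp : ℚ_[p]) (cl dl : ℚ_[l])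
    (hp : cp ^ 2 + dp ^ 2 + 1 = 0) (hl : cl ^ 2 + dl ^ 2 + 1 = 0)
    (x : ℍ[ℤ]) : PGL2 ℚ_[p] × PGL2 ℚ_[l] :=
  (QuotientGroup.mk (psiGL cp dp hp x), QuotientGroup.mk (psiGL cl dl hl x))

/-- The group `Γ = ψ(Γ̃)`, as the subgroup of `PGL₂(ℚ_p) × PGL₂(ℚ_l)` generated by
the image `ψ(Γ̃)` (this image is itself closed under multiplication and inverses,
so it coincides with the generated subgroup). -/
def Gamma (cp dp : ℚ_[p]) (cl dl : ℚ_[l])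
    (hp : cp ^ 2 + dp ^ 2 + 1 = 0) (hl : cl ^ 2 + dl ^ 2 + 1 = 0) :
    Subgroup (PGL2 ℚ_[p] × PGL2 ℚ_[l]) :=
  Subgroup.closure (psi p l cp dp cl dl hp hl '' GammaTilde p l)

/-- The subgroup `Γ_p = ⟨ψ(Ã)⟩`. -/
def GammaP (cp dp : ℚ_[p]) (cl dl : ℚ_[l])
    (hp : cp ^ 2 + dp ^ 2 + 1 = 0) (hl : cl ^ 2 + dl ^ 2 + 1 = 0) :
    Subgroup (PGL2 ℚ_[p] × PGL2 ℚ_[l]) :=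
  Subgroup.closure (psi p l cp dp cl dl hp hl '' Atilde p l)

/-- The subgroup `Γ_l = ⟨ψ(B̃)⟩`. -/
def GammaL (cp dp : ℚ_[p]) (cl dl : ℚ_[l])
    (hp : cp ^ 2 + dp ^ 2 + 1 = 0) (hl : cl ^ 2 + dl ^ 2 + 1 = 0) :
    Subgroup (PGL2 ℚ_[p] × PGL2 ℚ_[l]) :=
  Subgroup.closure (psi p l cp dp cl dl hp hl '' Btilde p l)

/-! Every element of `Γ` is `ψ x` for an integer quaternion `x` congruent to `1` or `1 + j + k`
modulo `2`, so with odd, hence nonzero, real part, and `ψ` is multiplicative with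
`ψ x̄ = (ψ x)⁻¹`. For `a = ψ x`, `b = ψ y` we get `bab⁻¹ = ψ z` with `z = y x ȳ`. The
quaternions `zx` and `xz` have the same nonzero real part; as `M_{c,d}` is injective and passing
to `PGL₂` only loses a scalar, which the trace pins down, `ψ (zx) = ψ (xz)` forces `zx = xz`.

With `u`, `v` the imaginary parts of `y`, `x` and `s = re y`, the imaginary part of `zx - xz` is
`4 ((u ⬝ v) (u × v) - s v × (u × v))`. Dotting with `u × v` gives `u ⬝ v = 0` or `u × v = 0`; in
the first case `s ≠ 0` gives `v × (u × v) = 0`, whose squared length is `‖v‖² ‖u × v‖²`. Either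
way `u × v = 0`, i.e. `x` and `y` commute.
-/

section CrossProduct

variable {R : Type*} [CommRing R] [LinearOrder R] [IsStrictOrderedRing R]

lemma cross_eq_zero_of_dotProduct_smul_cross_eq {u v : Fin 3 → R} {s : R} (hs : s ≠ 0)
    (h : (u ⬝ᵥ v) • (u ⨯₃ v) = s • (v ⨯₃ (u ⨯₃ v))) : u ⨯₃ v = 0 := by
  have hdot : (u ⬝ᵥ v) * (u ⨯₃ v ⬝ᵥ u ⨯₃ v) = 0 := by
    rw [← smul_eq_mul, ← smul_dotProduct, h, smul_dotProduct, dotProduct_comm, dot_cross_self,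
      smul_zero]
  rcases mul_eq_zero.mp hdot with huv | hcross
  · have hvw : v ⨯₃ (u ⨯₃ v) = 0 := by
      rw [huv, zero_smul, eq_comm, smul_eq_zero] at h
      exact h.resolve_left hs
    have hlen : (v ⬝ᵥ v) * (u ⨯₃ v ⬝ᵥ u ⨯₃ v) = 0 := by
      have := cross_dot_cross v (u ⨯₃ v) v (u ⨯₃ v)
      rwa [hvw, zero_dotProduct, dot_cross_self, zero_mul, sub_zero, eq_comm] at this
    rcases mul_eq_zero.mp hlen with hv | hw
    · rw [dotProduct_self_eq_zero.mp hv, map_zero]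
    · exact dotProduct_self_eq_zero.mp hw
  · exact dotProduct_self_eq_zero.mp hcross

end CrossProduct

namespace Quaternion

section CommRing

variable {R : Type*} [CommRing R]

def imVec (x : ℍ[R]) : Fin 3 → R := ![x.imI, x.imJ, x.imK]

@[simp]
lemma imVec_zero : imVec (0 : ℍ[R]) = 0 := by
  ext i; fin_cases i <;> rfl

lemma re_mul_comm (x y : ℍ[R]) : (x * y).re = (y * x).re := by
  simp only [re_mul]; ring

lemma mul_comm_of_cross_imVec_eq_zero {x y : ℍ[R]} (h : imVec x ⨯₃ imVec y = 0) :
    x * y = y * x := by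
  have h0 := congrFun h 0
  have h1 := congrFun h 1
  have h2 := congrFun h 2
  simp only [imVec, cross_apply, cons_val_zero, cons_val_one, cons_val, Pi.zero_apply] at h0 h1 h2
  ext <;> simp only [re_mul, imI_mul, imJ_mul, imK_mul]
  · ring
  · linear_combination 2 * h0
  · linear_combination 2 * h1
  · linear_combination 2 * h2

lemma imVec_conj_mul_sub_mul (x y : ℍ[R]) :
    imVec (y * x * star y * x - x * (y * x * star y)) =
      (4 : R) • ((imVec y ⬝ᵥ imVec x) • (imVec y ⨯₃ imVec x)
        - y.re • (imVec x ⨯₃ (imVec y ⨯₃ imVec x))) := by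
  ext i
  fin_cases i <;>
    simp only [imVec, cross_apply, Fin.zero_eta, Fin.mk_one, Fin.reduceFinMk, Fin.isValue,
      cons_val, cons_val_zero, cons_val_one, dotProduct_cons, dotProduct_of_isEmpty, head_cons,
      tail_cons, smul_cons, smul_eq_mul, smul_empty, sub_cons, sub_self, zero_empty, add_zero,
      Pi.smul_apply, imI_sub, imJ_sub, imK_sub, imI_mul, imJ_mul, imK_mul, re_mul, re_star,
      imI_star, imJ_star, imK_star] <;>
    ring

end CommRing

section Ordered

variable {R : Type*} [CommRing R] [LinearOrder R] [IsStrictOrderedRing R]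

lemma mul_comm_of_conj_mul_comm {x y : ℍ[R]} (hy : y.re ≠ 0)
    (h : y * x * star y * x = x * (y * x * star y)) : x * y = y * x := by
  have hvec := imVec_conj_mul_sub_mul x y
  rw [h, sub_self, imVec_zero, eq_comm, smul_eq_zero, sub_eq_zero] at hvec
  exact (mul_comm_of_cross_imVec_eq_zero
    (cross_eq_zero_of_dotProduct_smul_cross_eq hy (hvec.resolve_left four_ne_zero))).symm

end Ordered

end Quaternion

/-- The integer quaternions congruent to `1` or `1 + j + k` modulo `2`; for quaternions of odd
norm these are exactly the parity conditions in the definition of `GammaTilde`. -/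
def modTwoSubmonoid : Submonoid ℍ[ℤ] where
  carrier := {x | (x.re : ZMod 2) = 1 ∧ (x.imI : ZMod 2) = 0 ∧ (x.imJ : ZMod 2) = x.imK}
  one_mem' := by simp
  mul_mem' := by
    rintro x y ⟨hx0, hx1, hx2⟩ ⟨hy0, hy1, hy2⟩
    simp only [Set.mem_ofPred_eq, re_mul, imI_mul, imJ_mul, imK_mul]
    push_cast
    rw [hx0, hx1, hx2, hy0, hy1, hy2]
    generalize (x.imK : ZMod 2) = a
    generalize (y.imK : ZMod 2) = b
    revert a b
    decide

lemma star_mem_modTwoSubmonoid {x : ℍ[ℤ]} (hx : x ∈ modTwoSubmonoid) :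
    star x ∈ modTwoSubmonoid := by
  obtain ⟨h0, h1, h2⟩ := hx
  refine ⟨?_, ?_, ?_⟩ <;> simp only [re_star, imI_star, imJ_star, imK_star, Int.cast_neg]
  · exact h0
  · rw [h1, neg_zero]
  · rw [h2]

lemma re_ne_zero_of_mem_modTwoSubmonoid {x : ℍ[ℤ]} (hx : x ∈ modTwoSubmonoid) : x.re ≠ 0 := by
  intro h
  have h1 := hx.1
  rw [h, Int.cast_zero] at h1
  exact zero_ne_one h1

lemma ne_zero_of_mem_modTwoSubmonoid {x : ℍ[ℤ]} (hx : x ∈ modTwoSubmonoid) : x ≠ 0 := by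
  rintro rfl
  exact re_ne_zero_of_mem_modTwoSubmonoid hx rfl

lemma GammaTilde_subset_modTwoSubmonoid {p l : ℕ} (hp : Odd p) (hl : Odd l) :
    GammaTilde p l ⊆ modTwoSubmonoid := by
  rintro x ⟨⟨r, s, hnorm⟩, h1, h3⟩
  have hodd : Odd (normSq x) := by
    rw [hnorm]
    exact (Odd.pow (by exact_mod_cast hp)).mul (Odd.pow (by exact_mod_cast hl))
  have hmod : normSq x % 4 = 1 ∨ normSq x % 4 = 3 := by
    rw [Int.odd_iff] at hodd
    omega
  rcases hmod with hmod | hmod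
  · obtain ⟨h0, hI, hJ, hK⟩ := h1 hmod
    exact ⟨ZMod.intCast_eq_one_iff_odd.mpr h0, ZMod.intCast_eq_zero_iff_even.mpr hI,
      by rw [ZMod.intCast_eq_zero_iff_even.mpr hJ, ZMod.intCast_eq_zero_iff_even.mpr hK]⟩
  · obtain ⟨hI, h0, hJ, hK⟩ := h3 hmod
    exact ⟨ZMod.intCast_eq_one_iff_odd.mpr h0, ZMod.intCast_eq_zero_iff_even.mpr hI,
      by rw [ZMod.intCast_eq_one_iff_odd.mpr hJ, ZMod.intCast_eq_one_iff_odd.mpr hK]⟩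

section Mcd

variable {K : Type*} [Field K] {c d : K}

lemma Mcd_mul (hcd : c ^ 2 + d ^ 2 + 1 = 0) (x y : ℍ[ℤ]) :
    Mcd c d (x * y) = Mcd c d x * Mcd c d y := by
  rw [Mcd, Mcd, Mcd, mul_fin_two]
  ext i j
  fin_cases i <;> fin_cases j <;>
    simp only [of_apply, cons_val', cons_val_zero, cons_val_one, empty_val', cons_val_fin_one,
      re_mul, imI_mul, imJ_mul, imK_mul, Fin.zero_eta, Fin.mk_one] <;> push_cast
  · linear_combination (-(x.imK : K) * y.imK - (x.imI : K) * y.imI) * hcd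
  · linear_combination ((x.imK : K) * y.imI - (x.imI : K) * y.imK) * hcd
  · linear_combination (-(x.imK : K) * y.imI + (x.imI : K) * y.imK) * hcd
  · linear_combination (-(x.imK : K) * y.imK - (x.imI : K) * y.imI) * hcd

lemma Mcd_intCast (n : ℤ) : Mcd c d (n : ℍ[ℤ]) = scalar (Fin 2) (n : K) := by
  ext i j
  fin_cases i <;> fin_cases j <;> simp [Mcd, Matrix.intCast_apply]

lemma trace_Mcd (x : ℍ[ℤ]) : (Mcd c d x).trace = 2 * x.re := by
  rw [Mcd, trace_fin_two_of]
  ring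

lemma Mcd_injective [CharZero K] (hcd : c ^ 2 + d ^ 2 + 1 = 0) :
    Function.Injective (Mcd c d : ℍ[ℤ] → Matrix (Fin 2) (Fin 2) K) := by
  intro x y h
  have h00 := congrFun (congrFun h 0) 0
  have h01 := congrFun (congrFun h 0) 1
  have h10 := congrFun (congrFun h 1) 0
  have h11 := congrFun (congrFun h 1) 1
  simp only [Mcd, of_apply, cons_val', cons_val_zero, cons_val_one, empty_val',
    cons_val_fin_one] at h00 h01 h10 h11
  have cancel {m n : ℤ} (hmn : (2 : K) * m = 2 * n) : m = n :=
    Int.cast_injective (mul_left_cancel₀ two_ne_zero hmn)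
  ext
  · exact cancel (by linear_combination h00 + h11)
  · exact cancel
      (by linear_combination d * (h01 + h10) - c * (h00 - h11) + 2 * (x.imI - y.imI : K) * hcd)
  · exact cancel (by linear_combination h01 - h10)
  · exact cancel
      (by linear_combination -c * (h01 + h10) - d * (h00 - h11) + 2 * (x.imK - y.imK : K) * hcd)

end Mcd

section PsiGL

variable {K : Type*} [Field K] [CharZero K] {c d : K} (hcd : c ^ 2 + d ^ 2 + 1 = 0)

lemma val_psiGL {x : ℍ[ℤ]} (hx : x ≠ 0) :
    (psiGL c d hcd x : Matrix (Fin 2) (Fin 2) K) = Mcd c d x := by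
  rw [psiGL, dif_neg hx]
  rfl

lemma psiGL_one : psiGL c d hcd 1 = 1 := by
  ext1
  rw [val_psiGL hcd one_ne_zero, ← Int.cast_one, Mcd_intCast, Int.cast_one, Units.val_one,
    scalar_apply, diagonal_one]

lemma psiGL_mul {x y : ℍ[ℤ]} (hx : x ≠ 0) (hy : y ≠ 0) :
    psiGL c d hcd (x * y) = psiGL c d hcd x * psiGL c d hcd y := by
  ext1
  rw [Units.val_mul, val_psiGL hcd (mul_ne_zero hx hy), val_psiGL hcd hx, val_psiGL hcd hy,
    Mcd_mul hcd]

lemma psiGL_intCast_mem_center {n : ℤ} (hn : n ≠ 0) :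
    psiGL c d hcd n ∈ Subgroup.center (GL (Fin 2) K) := by
  have hn' : (n : ℍ[ℤ]) ≠ 0 := fun h => hn (by simpa using congrArg QuaternionAlgebra.re h)
  rw [GeneralLinearGroup.mem_center_iff_val_mem_range_scalar, val_psiGL hcd hn', Mcd_intCast]
  exact Set.mem_range_self _

lemma mk_psiGL_star {x : ℍ[ℤ]} (hx : x ≠ 0) :
    (psiGL c d hcd (star x) : PGL2 K) = (psiGL c d hcd x : PGL2 K)⁻¹ := by
  refine eq_inv_of_mul_eq_one_left ?_
  rw [← QuotientGroup.mk_mul, ← psiGL_mul hcd (star_ne_zero.mpr hx) hx, star_mul_self,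
    QuotientGroup.eq_one_iff]
  exact psiGL_intCast_mem_center hcd (normSq_ne_zero.mpr hx)

lemma eq_of_mk_psiGL_eq {w z : ℍ[ℤ]} (hre : w.re = z.re) (hw : w.re ≠ 0)
    (h : (psiGL c d hcd w : PGL2 K) = psiGL c d hcd z) : w = z := by
  have ne_zero {x : ℍ[ℤ]} (hx : x.re ≠ 0) : x ≠ 0 := fun h0 => hx (by simp [h0])
  rw [QuotientGroup.eq, GeneralLinearGroup.mem_center_iff_val_mem_range_scalar] at h
  obtain ⟨t, ht⟩ := h
  have hMcd : Mcd c d z = t • Mcd c d w := by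
    rw [← val_psiGL hcd (ne_zero (hre ▸ hw)), ← val_psiGL hcd (ne_zero hw),
      ← mul_inv_cancel_left (psiGL c d hcd w) (psiGL c d hcd z), Units.val_mul, ← ht,
      scalar_apply, ← smul_eq_mul_diagonal]
  have ht1 : t = 1 := by
    have htr := congrArg trace hMcd
    rw [trace_smul, trace_Mcd, trace_Mcd, ← hre, smul_eq_mul] at htr
    have : (2 * w.re : K) ≠ 0 := mul_ne_zero two_ne_zero (by exact_mod_cast hw)
    exact (mul_eq_right₀ this).mp htr.symm
  rw [ht1, one_smul] at hMcd
  exact Mcd_injective hcd hMcd.symm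

end PsiGL

section Psi

variable {p l} {cp dp : ℚ_[p]} {cl dl : ℚ_[l]} (hcp : cp ^ 2 + dp ^ 2 + 1 = 0)
  (hcl : cl ^ 2 + dl ^ 2 + 1 = 0)

lemma psi_one : psi p l cp dp cl dl hcp hcl 1 = 1 := by
  simp only [psi, psiGL_one, QuotientGroup.mk_one, Prod.mk_one_one]

lemma psi_mul {x y : ℍ[ℤ]} (hx : x ≠ 0) (hy : y ≠ 0) :
    psi p l cp dp cl dl hcp hcl (x * y) =
      psi p l cp dp cl dl hcp hcl x * psi p l cp dp cl dl hcp hcl y := by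
  simp only [psi, psiGL_mul _ hx hy, QuotientGroup.mk_mul, Prod.mk_mul_mk]

lemma psi_star {x : ℍ[ℤ]} (hx : x ≠ 0) :
    psi p l cp dp cl dl hcp hcl (star x) = (psi p l cp dp cl dl hcp hcl x)⁻¹ := by
  simp only [psi, mk_psiGL_star _ hx, Prod.inv_mk]

lemma psi_conj {x y : ℍ[ℤ]} (hx : x ≠ 0) (hy : y ≠ 0) :
    psi p l cp dp cl dl hcp hcl (y * x * star y) =
      psi p l cp dp cl dl hcp hcl y * psi p l cp dp cl dl hcp hcl x *
        (psi p l cp dp cl dl hcp hcl y)⁻¹ := by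
  rw [psi_mul hcp hcl (mul_ne_zero hy hx) (star_ne_zero.mpr hy), psi_mul hcp hcl hy hx,
    psi_star hcp hcl hy]

lemma eq_of_psi_eq {w z : ℍ[ℤ]} (hre : w.re = z.re) (hw : w.re ≠ 0)
    (h : psi p l cp dp cl dl hcp hcl w = psi p l cp dp cl dl hcp hcl z) : w = z :=
  eq_of_mk_psiGL_eq hcp hre hw (congrArg Prod.fst h)

lemma exists_eq_psi_of_mem_Gamma (hp : Odd p) (hl : Odd l) {a : PGL2 ℚ_[p] × PGL2 ℚ_[l]}
    (ha : a ∈ Gamma p l cp dp cl dl hcp hcl) :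
    ∃ x ∈ modTwoSubmonoid, a = psi p l cp dp cl dl hcp hcl x := by
  induction ha using Subgroup.closure_induction with
  | mem _ hx =>
    obtain ⟨x, hx, rfl⟩ := hx
    exact ⟨x, GammaTilde_subset_modTwoSubmonoid hp hl hx, rfl⟩
  | one => exact ⟨1, one_mem _, (psi_one hcp hcl).symm⟩
  | mul _ _ _ _ ihu ihv =>
    obtain ⟨x, hx, rfl⟩ := ihu
    obtain ⟨y, hy, rfl⟩ := ihv
    exact ⟨x * y, mul_mem hx hy, (psi_mul hcp hcl (ne_zero_of_mem_modTwoSubmonoid hx)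
      (ne_zero_of_mem_modTwoSubmonoid hy)).symm⟩
  | inv _ _ ih =>
    obtain ⟨x, hx, rfl⟩ := ih
    exact ⟨star x, star_mem_modTwoSubmonoid hx,
      (psi_star hcp hcl (ne_zero_of_mem_modTwoSubmonoid hx)).symm⟩

end Psi

theorem conj_commute_iff_gamma_general (p l : ℕ) [Fact p.Prime] [Fact l.Prime]
    (hp2 : p ≠ 2) (hl2 : l ≠ 2)
    (cp dp : ℚ_[p]) (cl dl : ℚ_[l])
    (hcp : cp ^ 2 + dp ^ 2 + 1 = 0) (hcl : cl ^ 2 + dl ^ 2 + 1 = 0)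
    (a b : PGL2 ℚ_[p] × PGL2 ℚ_[l])
    (ha : a ∈ Gamma p l cp dp cl dl hcp hcl) (hb : b ∈ Gamma p l cp dp cl dl hcp hcl) :
    (b * a * b⁻¹) * a = a * (b * a * b⁻¹) ↔ b * a = a * b := by
  refine ⟨fun h => ?_, fun h => by rw [h, mul_inv_cancel_right]⟩
  have hp : Odd p := (Fact.out : p.Prime).odd_of_ne_two hp2
  have hl : Odd l := (Fact.out : l.Prime).odd_of_ne_two hl2
  obtain ⟨x, hx, rfl⟩ := exists_eq_psi_of_mem_Gamma hcp hcl hp hl ha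
  obtain ⟨y, hy, rfl⟩ := exists_eq_psi_of_mem_Gamma hcp hcl hp hl hb
  have hz : y * x * star y ∈ modTwoSubmonoid :=
    mul_mem (mul_mem hy hx) (star_mem_modTwoSubmonoid hy)
  have hx0 := ne_zero_of_mem_modTwoSubmonoid hx
  have hy0 := ne_zero_of_mem_modTwoSubmonoid hy
  have hz0 := ne_zero_of_mem_modTwoSubmonoid hz
  rw [← psi_conj hcp hcl hx0 hy0, ← psi_mul hcp hcl hz0 hx0, ← psi_mul hcp hcl hx0 hz0] at h
  have hzx : y * x * star y * x = x * (y * x * star y) :=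
    eq_of_psi_eq hcp hcl (re_mul_comm _ _) (re_ne_zero_of_mem_modTwoSubmonoid (mul_mem hz hx)) h
  rw [← psi_mul hcp hcl hy0 hx0, ← psi_mul hcp hcl hx0 hy0,
    mul_comm_of_conj_mul_comm (re_ne_zero_of_mem_modTwoSubmonoid hy) hzx]

/-- Lemma 4(b): for `a, b ∈ Γ`, `bab⁻¹` commutes with `a` if and only if
`b` commutes with `a`. -/
theorem conj_commute_iff_gamma (p l : ℕ) [Fact p.Prime] [Fact l.Prime]
    (hp2 : p ≠ 2) (hl2 : l ≠ 2) (hpl : p ≠ l)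
    (cp dp : ℚ_[p]) (cl dl : ℚ_[l])
    (hcp : cp ^ 2 + dp ^ 2 + 1 = 0) (hcl : cl ^ 2 + dl ^ 2 + 1 = 0)
    (a b : PGL2 ℚ_[p] × PGL2 ℚ_[l])
    (ha : a ∈ Gamma p l cp dp cl dl hcp hcl) (hb : b ∈ Gamma p l cp dp cl dl hcp hcl) :
    (b * a * b⁻¹) * a = a * (b * a * b⁻¹) ↔ b * a = a * b :=
  conj_commute_iff_gamma_general p l hp2 hl2 cp dp cl dl hcp hcl a b ha hb
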